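/- Let d ≥ 2, w⋆ ∈ ℝ^d and i ∈ {1,…,d}. Define M = [[I_d, w⋆],[w⋆^T, ‖w⋆‖² + d]] ∈ ℝ^{(d+1)×(d+1)} and N = [[0_{d×d}, e_i],[e_i^T, 2·w⋆[i]]] ∈ ℝ^{(d+1)×(d+1)}, where e_i ∈ ℝ^d is the i-th standard basis vector. Then M is invertible, N is nonzero with rank(N) ≤ 2, and for every scalar c ∈ ℝ one has c·M − 2·N ≠ 0. In particular, the limiting gradient (2⟨M, M_i⟩ − 2 w⋆[i])·M − 2·N of the component risk L_i is nonzero for every matrix M_i ∈ ℝ^{(d+1)×(d+1)}. -/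

import Mathlib

open Matrix

/-- The `(d+1)×(d+1)` block matrix `M = [[I_d, w⋆],[w⋆ᵀ, ‖w⋆‖² + d]]`. -/
noncomputable def blockM (d : ℕ) (wstar : EuclideanSpace ℝ (Fin d)) :
    Matrix (Fin d ⊕ Unit) (Fin d ⊕ Unit) ℝ :=
  Matrix.fromBlocks (1 : Matrix (Fin d) (Fin d) ℝ)
    (Matrix.of fun i (_ : Unit) => wstar i)
    (Matrix.of fun (_ : Unit) j => wstar j)
    (Matrix.of fun (_ : Unit) (_ : Unit) => ‖wstar‖ ^ 2 + d)

/-- The `(d+1)×(d+1)` block matrix `N = [[0, e_i],[e_iᵀ, 2 w⋆[i]]]`. -/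
noncomputable def blockN (d : ℕ) (wstar : EuclideanSpace ℝ (Fin d)) (i : Fin d) :
    Matrix (Fin d ⊕ Unit) (Fin d ⊕ Unit) ℝ :=
  Matrix.fromBlocks (0 : Matrix (Fin d) (Fin d) ℝ)
    (Matrix.of fun k (_ : Unit) => (Pi.single i 1 : Fin d → ℝ) k)
    (Matrix.of fun (_ : Unit) k => (Pi.single i 1 : Fin d → ℝ) k)
    (Matrix.of fun (_ : Unit) (_ : Unit) => 2 * wstar i)

lemma norm_sq_eq_sum {d : ℕ} (w : EuclideanSpace ℝ (Fin d)) :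
    ‖w‖ ^ 2 = ∑ k, w k * w k := by
  rw [← real_inner_self_eq_norm_sq]
  simp only [PiLp.inner_apply, RCLike.inner_apply, conj_trivial]

/-- For `d ≥ 2`, `w⋆ ∈ ℝ^d` and `i ∈ {1,…,d}`, with
`M = [[I_d, w⋆],[w⋆ᵀ, ‖w⋆‖² + d]]` and `N = [[0, e_i],[e_iᵀ, 2 w⋆[i]]]`:
`M` is invertible, `N` is nonzero with `rank N ≤ 2`, `c·M − 2·N ≠ 0` for every scalar `c`,
and in particular the limiting gradient `(2⟨M, M_i⟩ − 2 w⋆[i])·M − 2·N` of the component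
risk `L_i` is nonzero for every matrix `M_i`. -/
theorem stmt_9 (d : ℕ) (hd : 2 ≤ d) (wstar : EuclideanSpace ℝ (Fin d)) (i : Fin d) :
    IsUnit (blockM d wstar) ∧
    blockN d wstar i ≠ 0 ∧
    (blockN d wstar i).rank ≤ 2 ∧
    (∀ c : ℝ, c • blockM d wstar - (2 : ℝ) • blockN d wstar i ≠ 0) ∧
    (∀ Mi : Matrix (Fin d ⊕ Unit) (Fin d ⊕ Unit) ℝ,
      (2 * Matrix.trace (blockM d wstar * Miᵀ) - 2 * wstar i) • blockM d wstar -
          (2 : ℝ) • blockN d wstar i ≠ 0) := by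
  have key : ∀ c : ℝ, c • blockM d wstar - (2 : ℝ) • blockN d wstar i ≠ 0 := by
    intro c h
    have h1 := congrFun (congrFun h (Sum.inl ⟨0, by omega⟩)) (Sum.inl ⟨0, by omega⟩)
    have h2 := congrFun (congrFun h (Sum.inr ())) (Sum.inl i)
    simp [blockM, blockN, Matrix.one_apply] at h1 h2
    rw [h1] at h2
    simp at h2
  refine ⟨?_, ?_, ?_, key, fun Mi => key _⟩
  · rw [Matrix.isUnit_iff_isUnit_det, blockM, Matrix.det_fromBlocks_one₁₁,
      Matrix.det_unique]
    simp only [Matrix.sub_apply, Matrix.mul_apply, Matrix.of_apply]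
    rw [norm_sq_eq_sum]
    have h : (∑ k, wstar k * wstar k) + (d : ℝ) - ∑ k, wstar k * wstar k = d := by ring
    rw [h]
    exact isUnit_iff_ne_zero.2 (Nat.cast_ne_zero.2 (by omega))
  · intro h
    have := congrFun (congrFun h (Sum.inr ())) (Sum.inl i)
    simp [blockN] at this
  · -- rank ≤ 2 : N = P * Q with inner dimension 2
    set u : (Fin d ⊕ Unit) → ℝ :=
      Sum.elim (Pi.single i 1 : Fin d → ℝ) (fun _ => wstar i) with hu
    set e : (Fin d ⊕ Unit) → ℝ := Sum.elim 0 (fun _ => 1) with he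
    set P : Matrix (Fin d ⊕ Unit) (Fin 2) ℝ :=
      Matrix.of fun r j => if j = 0 then u r else e r with hP
    set Q : Matrix (Fin 2) (Fin d ⊕ Unit) ℝ :=
      Matrix.of fun j c => if j = 0 then e c else u c with hQ
    have hNPQ : blockN d wstar i = P * Q := by
      ext r c
      have : (P * Q) r c = u r * e c + e r * u c := by
        simp [Matrix.mul_apply, Fin.sum_univ_two, hP, hQ]
      rw [this]
      rcases r with k | _ <;> rcases c with l | _ <;>
        simp [blockN, hu, he, two_mul]
    rw [hNPQ]
    calc (P * Q).rank ≤ Q.rank := Matrix.rank_mul_le_right P Q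
      _ ≤ Fintype.card (Fin 2) := Matrix.rank_le_card_height Q
      _ = 2 := by simp
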